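/- arXiv:2108.07992 — 4 statements merged into one kernel-verified Lean document; each statement's English description precedes it below -/
import Mathlib

section
/- Let P and Q be discrete measures with at most n supports and weight vectors a, b ∈ ℝ^n_+, let C ∈ ℝ_+^{n×n} be a cost matrix, and let 0 ≤ s ≤ min{‖a‖₁, ‖b‖₁}. For any A > 0, define the extended cost matrix C̄ ∈ ℝ_+^{(n+1)×(n+1)} whose top-left n×n block is C, whose last row and last column are zero except the corner entry C̄_{n+1,n+1} = A, and set ā = [a, ‖b‖₁ − s] ∈ ℝ^{n+1}_+ and b̄ = [b, ‖a‖₁ − s] ∈ ℝ^{n+1}_+. Then min_{X ∈ Π^s(a,b)} ⟨C, X⟩ = min_{X̄ ∈ Π(ā,b̄)} ⟨C̄, X̄⟩, and for any minimizer X̄* of the right-hand problem, its top-left n×n block is a minimizer of the left-hand problem. -/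
open Finset

noncomputable section

/-- Entrywise (Frobenius) inner product of matrices. -/
def dot2 {n : ℕ} (C X : Fin n → Fin n → ℝ) : ℝ :=
  ∑ i, ∑ j, C i j * X i j

/-- The partial transport polytope `Π^s(a, b)`. -/
def PiPartial2 {n : ℕ} (a b : Fin n → ℝ) (s : ℝ) : Set (Fin n → Fin n → ℝ) :=
  {X | (∀ i j, 0 ≤ X i j) ∧ (∀ i, ∑ j, X i j ≤ a i) ∧ (∀ j, ∑ i, X i j ≤ b j) ∧
    ∑ i, ∑ j, X i j = s}

/-- The transport polytope `Π(a, b)` with equality marginal constraints. -/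
def PiEq2 {n : ℕ} (a b : Fin n → ℝ) : Set (Fin n → Fin n → ℝ) :=
  {X | (∀ i j, 0 ≤ X i j) ∧ (∀ i, ∑ j, X i j = a i) ∧ (∀ j, ∑ i, X i j = b j)}

/-- Extended cost matrix: top-left `n × n` block is `C`, last row and column are zero
except the corner entry, which is `A`. -/
def extCost2 {n : ℕ} (C : Fin n → Fin n → ℝ) (A : ℝ) : Fin (n + 1) → Fin (n + 1) → ℝ :=
  fun i j =>
    if hi : i = Fin.last n then (if j = Fin.last n then A else 0)
    else if hj : j = Fin.last n then 0
    else C (i.castPred hi) (j.castPred hj)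

/-!
A plan `Y ∈ Π(ā, b̄)` with corner entry `t` has a top-left block `B` with row and column sums at
most `a` and `b` and total mass `s + t`, and costs `⟨C, B⟩ + A t`. Conversely, a plan in
`Πˢ(a, b)` extends, by its marginal slacks in the last row and column and a zero corner, to a plan
in `Π(ā, b̄)` of the same cost. Rescaling `B` by `s / (s + t)` lands in `Πˢ(a, b)` without raising
the cost (as `C ≥ 0`), so the two infima agree; at a minimizer `Y` this rescaling would save
`A t`, hence `t = 0` and `B` itself is an optimal partial plan.
-/

theorem csInf_eq_csInf_of_subset_of_forall_exists_le {α : Type*} [ConditionallyCompleteLattice α]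
    {S T : Set α} (hS : BddBelow S) (hST : S ⊆ T) (hTS : ∀ y ∈ T, ∃ x ∈ S, x ≤ y) :
    sInf S = sInf T := by
  rcases S.eq_empty_or_nonempty with rfl | hSne
  · have hT : T = ∅ := Set.eq_empty_of_forall_notMem fun y hy => by
      obtain ⟨x, hx, -⟩ := hTS y hy
      exact hx
    rw [hT]
  obtain ⟨m, hm⟩ := hS
  have hT : BddBelow T := ⟨m, fun y hy => by
    obtain ⟨x, hx, hxy⟩ := hTS y hy
    exact (hm hx).trans hxy⟩
  refine le_antisymm ?_ (csInf_le_csInf hT hSne hST)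
  refine le_csInf (hSne.mono hST) fun y hy => ?_
  obtain ⟨x, hx, hxy⟩ := hTS y hy
  exact (csInf_le ⟨m, hm⟩ hx).trans hxy

section TransportPlans

variable {n : ℕ}

theorem dot2_nonneg {C X : Fin n → Fin n → ℝ} (hC : ∀ i j, 0 ≤ C i j)
    (hX : ∀ i j, 0 ≤ X i j) : 0 ≤ dot2 C X :=
  sum_nonneg fun i _ => sum_nonneg fun j _ => mul_nonneg (hC i j) (hX i j)

theorem dot2_smul (C X : Fin n → Fin n → ℝ) (c : ℝ) : dot2 C (c • X) = c * dot2 C X := by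
  simp only [dot2, Pi.smul_apply, smul_eq_mul, mul_sum]
  exact sum_congr rfl fun i _ => sum_congr rfl fun j _ => by ring

theorem smul_mem_PiPartial2 {a b : Fin n → ℝ} {m s : ℝ} {X : Fin n → Fin n → ℝ}
    (hX : X ∈ PiPartial2 a b m) (hs0 : 0 ≤ s) (hsm : s ≤ m) :
    (s / m) • X ∈ PiPartial2 a b s := by
  obtain ⟨hX0, hrow, hcol, htot⟩ := hX
  have hc0 : 0 ≤ s / m := div_nonneg hs0 (hs0.trans hsm)
  have hc1 : s / m ≤ 1 := div_le_one_of_le₀ hsm (hs0.trans hsm)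
  refine ⟨fun i j => mul_nonneg hc0 (hX0 i j), fun i => ?_, fun j => ?_, ?_⟩
  · simp only [Pi.smul_apply, smul_eq_mul, ← mul_sum]
    exact (mul_le_of_le_one_left (sum_nonneg fun j _ => hX0 i j) hc1).trans (hrow i)
  · simp only [Pi.smul_apply, smul_eq_mul, ← mul_sum]
    exact (mul_le_of_le_one_left (sum_nonneg fun i _ => hX0 i j) hc1).trans (hcol j)
  · simp only [Pi.smul_apply, smul_eq_mul, ← mul_sum, htot]
    exact div_mul_cancel_of_imp fun hm => by linarith

def topLeft (Y : Fin (n + 1) → Fin (n + 1) → ℝ) : Fin n → Fin n → ℝ :=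
  fun i j => Y i.castSucc j.castSucc

theorem dot2_extCost2 (C : Fin n → Fin n → ℝ) (A : ℝ) (Y : Fin (n + 1) → Fin (n + 1) → ℝ) :
    dot2 (extCost2 C A) Y = dot2 C (topLeft Y) + A * Y (Fin.last n) (Fin.last n) := by
  simp [dot2, topLeft, extCost2, Fin.sum_univ_castSucc, (Fin.castSucc_lt_last _).ne]

theorem topLeft_mem_PiPartial2 {a b : Fin n → ℝ} {s : ℝ} {Y : Fin (n + 1) → Fin (n + 1) → ℝ}
    (hY : Y ∈ PiEq2 (Fin.snoc a ((∑ i, b i) - s)) (Fin.snoc b ((∑ i, a i) - s))) :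
    topLeft Y ∈ PiPartial2 a b (s + Y (Fin.last n) (Fin.last n)) := by
  obtain ⟨hY0, hrow, hcol⟩ := hY
  have hrow' : ∀ i, ∑ j, topLeft Y i j = a i - Y i.castSucc (Fin.last n) := fun i => by
    have := hrow i.castSucc
    rw [Fin.sum_univ_castSucc, Fin.snoc_castSucc] at this
    simp only [topLeft]
    linarith
  have hcol' : ∀ j, ∑ i, topLeft Y i j = b j - Y (Fin.last n) j.castSucc := fun j => by
    have := hcol j.castSucc
    rw [Fin.sum_univ_castSucc, Fin.snoc_castSucc] at this
    simp only [topLeft]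
    linarith
  have hlast :
      ∑ i : Fin n, Y i.castSucc (Fin.last n) + Y (Fin.last n) (Fin.last n) = ∑ i, a i - s := by
    rw [← Fin.sum_univ_castSucc (f := fun i : Fin (n + 1) => Y i (Fin.last n)), hcol, Fin.snoc_last]
  refine ⟨fun i j => hY0 _ _, fun i => ?_, fun j => ?_, ?_⟩
  · linarith [hrow' i, hY0 i.castSucc (Fin.last n)]
  · linarith [hcol' j, hY0 (Fin.last n) j.castSucc]
  · rw [sum_congr rfl fun i _ => hrow' i, sum_sub_distrib]
    linarith

def extendPlan (a b : Fin n → ℝ) (X : Fin n → Fin n → ℝ) : Fin (n + 1) → Fin (n + 1) → ℝ :=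
  Fin.snoc (fun i => Fin.snoc (X i) (a i - ∑ j, X i j)) (Fin.snoc (fun j => b j - ∑ i, X i j) 0)

@[simp]
theorem extendPlan_castSucc_castSucc (a b : Fin n → ℝ) (X : Fin n → Fin n → ℝ) (i j : Fin n) :
    extendPlan a b X i.castSucc j.castSucc = X i j := by
  simp [extendPlan]

@[simp]
theorem extendPlan_castSucc_last (a b : Fin n → ℝ) (X : Fin n → Fin n → ℝ) (i : Fin n) :
    extendPlan a b X i.castSucc (Fin.last n) = a i - ∑ j, X i j := by
  simp [extendPlan]

@[simp]
theorem extendPlan_last_castSucc (a b : Fin n → ℝ) (X : Fin n → Fin n → ℝ) (j : Fin n) :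
    extendPlan a b X (Fin.last n) j.castSucc = b j - ∑ i, X i j := by
  simp [extendPlan]

@[simp]
theorem extendPlan_last_last (a b : Fin n → ℝ) (X : Fin n → Fin n → ℝ) :
    extendPlan a b X (Fin.last n) (Fin.last n) = 0 := by
  simp [extendPlan]

@[simp]
theorem topLeft_extendPlan (a b : Fin n → ℝ) (X : Fin n → Fin n → ℝ) :
    topLeft (extendPlan a b X) = X := by
  ext i j
  simp [topLeft]

theorem dot2_extCost2_extendPlan (C : Fin n → Fin n → ℝ) (A : ℝ) (a b : Fin n → ℝ)
    (X : Fin n → Fin n → ℝ) : dot2 (extCost2 C A) (extendPlan a b X) = dot2 C X := by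
  simp [dot2_extCost2]

theorem extendPlan_mem_PiEq2 {a b : Fin n → ℝ} {s : ℝ} {X : Fin n → Fin n → ℝ}
    (hX : X ∈ PiPartial2 a b s) :
    extendPlan a b X ∈ PiEq2 (Fin.snoc a ((∑ i, b i) - s)) (Fin.snoc b ((∑ i, a i) - s)) := by
  obtain ⟨hX0, hrow, hcol, htot⟩ := hX
  have htot' : ∑ j, ∑ i, X i j = s := by rw [sum_comm, htot]
  refine ⟨fun i j => ?_, fun i => ?_, fun j => ?_⟩
  · induction i using Fin.lastCases <;> induction j using Fin.lastCases <;>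
      simp [hX0, hrow, hcol]
  · induction i using Fin.lastCases with
    | last => simp [Fin.sum_univ_castSucc, sum_sub_distrib, htot']
    | cast i => simp [Fin.sum_univ_castSucc]
  · induction j using Fin.lastCases with
    | last => simp [Fin.sum_univ_castSucc, sum_sub_distrib, htot]
    | cast j => simp [Fin.sum_univ_castSucc]

theorem exists_mem_PiPartial2_dot2_le_topLeft {C : Fin n → Fin n → ℝ} (hC : ∀ i j, 0 ≤ C i j)
    {a b : Fin n → ℝ} {s : ℝ} (hs0 : 0 ≤ s) {Y : Fin (n + 1) → Fin (n + 1) → ℝ}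
    (hY : Y ∈ PiEq2 (Fin.snoc a ((∑ i, b i) - s)) (Fin.snoc b ((∑ i, a i) - s))) :
    ∃ X ∈ PiPartial2 a b s, dot2 C X ≤ dot2 C (topLeft Y) := by
  have hsm : s ≤ s + Y (Fin.last n) (Fin.last n) := le_add_of_nonneg_right (hY.1 _ _)
  have hY' := topLeft_mem_PiPartial2 hY
  refine ⟨_, smul_mem_PiPartial2 hY' hs0 hsm, ?_⟩
  rw [dot2_smul]
  exact mul_le_of_le_one_left (dot2_nonneg hC hY'.1) (div_le_one_of_le₀ hsm (hs0.trans hsm))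

theorem corner_eq_zero_of_forall_dot2_extCost2_le {C : Fin n → Fin n → ℝ}
    (hC : ∀ i j, 0 ≤ C i j) {A : ℝ} (hA : 0 < A) {a b : Fin n → ℝ} {s : ℝ} (hs0 : 0 ≤ s)
    {Y : Fin (n + 1) → Fin (n + 1) → ℝ}
    (hY : Y ∈ PiEq2 (Fin.snoc a ((∑ i, b i) - s)) (Fin.snoc b ((∑ i, a i) - s)))
    (hmin : ∀ Z ∈ PiEq2 (Fin.snoc a ((∑ i, b i) - s)) (Fin.snoc b ((∑ i, a i) - s)),
      dot2 (extCost2 C A) Y ≤ dot2 (extCost2 C A) Z) :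
    Y (Fin.last n) (Fin.last n) = 0 := by
  obtain ⟨X, hX, hle⟩ := exists_mem_PiPartial2_dot2_le_topLeft hC hs0 hY
  have hY_le := hmin _ (extendPlan_mem_PiEq2 hX)
  rw [dot2_extCost2, dot2_extCost2_extendPlan] at hY_le
  have hcorner : A * Y (Fin.last n) (Fin.last n) ≤ 0 := by linarith
  exact le_antisymm (nonpos_of_mul_nonpos_right hcorner hA) (hY.1 _ _)

end TransportPlans

theorem pot_ot_equivalence_general {n : ℕ}
    (C : Fin n → Fin n → ℝ) (hC : ∀ i j, 0 ≤ C i j)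
    (a b : Fin n → ℝ)
    (s : ℝ) (hs0 : 0 ≤ s)
    (A : ℝ) (hA : 0 < A) :
    (sInf ((fun X => dot2 C X) '' PiPartial2 a b s)
        = sInf ((fun Y => dot2 (extCost2 C A) Y) ''
            PiEq2 (Fin.snoc a ((∑ i, b i) - s)) (Fin.snoc b ((∑ i, a i) - s)))) ∧
    (∀ Y ∈ PiEq2 (Fin.snoc a ((∑ i, b i) - s)) (Fin.snoc b ((∑ i, a i) - s)),
      (∀ Z ∈ PiEq2 (Fin.snoc a ((∑ i, b i) - s)) (Fin.snoc b ((∑ i, a i) - s)),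
        dot2 (extCost2 C A) Y ≤ dot2 (extCost2 C A) Z) →
      (fun i j => Y i.castSucc j.castSucc) ∈ PiPartial2 a b s ∧
        ∀ X ∈ PiPartial2 a b s,
          dot2 C (fun i j => Y i.castSucc j.castSucc) ≤ dot2 C X) := by
  refine ⟨csInf_eq_csInf_of_subset_of_forall_exists_le ?_ ?_ ?_, fun Y hY hmin => ?_⟩
  · exact ⟨0, by rintro _ ⟨X, hX, rfl⟩; exact dot2_nonneg hC hX.1⟩
  · rintro _ ⟨X, hX, rfl⟩
    exact ⟨extendPlan a b X, extendPlan_mem_PiEq2 hX, dot2_extCost2_extendPlan C A a b X⟩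
  · rintro _ ⟨Y, hY, rfl⟩
    obtain ⟨X, hX, hle⟩ := exists_mem_PiPartial2_dot2_le_topLeft hC hs0 hY
    refine ⟨_, ⟨X, hX, rfl⟩, ?_⟩
    show dot2 C X ≤ dot2 (extCost2 C A) Y
    rw [dot2_extCost2]
    exact le_add_of_le_of_nonneg hle (mul_nonneg hA.le (hY.1 _ _))
  have hcorner := corner_eq_zero_of_forall_dot2_extCost2_le hC hA hs0 hY hmin
  have hmem := topLeft_mem_PiPartial2 hY
  rw [hcorner, add_zero] at hmem
  refine ⟨hmem, fun X hX => ?_⟩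
  calc dot2 C (topLeft Y) = dot2 (extCost2 C A) Y := by
        rw [dot2_extCost2, hcorner, mul_zero, add_zero]
    _ ≤ dot2 (extCost2 C A) (extendPlan a b X) := hmin _ (extendPlan_mem_PiEq2 hX)
    _ = dot2 C X := dot2_extCost2_extendPlan C A a b X

/-- equivalence of the bi-marginal partial optimal transport problem with
an optimal transport problem on extended marginals `ā = [a, ‖b‖₁ − s]`,
`b̄ = [b, ‖a‖₁ − s]`, and the restriction of any minimizer of the extended problem
to its top-left `n × n` block is a minimizer of the partial problem. -/
theorem pot_ot_equivalence {n : ℕ} (hn : 1 ≤ n)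
    (C : Fin n → Fin n → ℝ) (hC : ∀ i j, 0 ≤ C i j)
    (a b : Fin n → ℝ) (ha : ∀ i, 0 ≤ a i) (hb : ∀ i, 0 ≤ b i)
    (s : ℝ) (hs0 : 0 ≤ s) (hsa : s ≤ ∑ i, a i) (hsb : s ≤ ∑ i, b i)
    (A : ℝ) (hA : 0 < A) :
    (sInf ((fun X => dot2 C X) '' PiPartial2 a b s)
        = sInf ((fun Y => dot2 (extCost2 C A) Y) ''
            PiEq2 (Fin.snoc a ((∑ i, b i) - s)) (Fin.snoc b ((∑ i, a i) - s)))) ∧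
    (∀ Y ∈ PiEq2 (Fin.snoc a ((∑ i, b i) - s)) (Fin.snoc b ((∑ i, a i) - s)),
      (∀ Z ∈ PiEq2 (Fin.snoc a ((∑ i, b i) - s)) (Fin.snoc b ((∑ i, a i) - s)),
        dot2 (extCost2 C A) Y ≤ dot2 (extCost2 C A) Z) →
      (fun i j => Y i.castSucc j.castSucc) ∈ PiPartial2 a b s ∧
        ∀ X ∈ PiPartial2 a b s,
          dot2 C (fun i j => Y i.castSucc j.castSucc) ≤ dot2 C X) :=
  pot_ot_equivalence_general C hC a b s hs0 A hA
end
end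

section
/- Assume Σ_r := Σ_{i=1}^m ‖r_i‖₁ ≥ (m−1)‖r_k‖₁ + s for all k ∈ [m]. Define extended marginals r̄_k^{(1)} = [r_k, Σ_r/(m−1) − ‖r_k‖₁ − s/(m−1)] ∈ ℝ^{n+1}_+ and the extended cost tensor C̄^{(1)} ∈ ℝ_+^{(n+1)^m} by C̄^{(1)}_v = C_v for v ∈ T_∅ and C̄^{(1)}_v = A_i for v ∈ T_S with |S| = i, where the reals A_i satisfy 0 = A_1 < A_2 < … < A_m. Then min_{X ∈ Π^s(r_1,…,r_m)} ⟨C, X⟩ = min_{X̄ ∈ Π(r̄_1^{(1)},…,r̄_m^{(1)})} ⟨C̄^{(1)}, X̄⟩. -/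
/-
A partial plan `X ∈ Π^s(r)` is padded with zeros and completed by a tensor that lives on the
sets `T_S` with `|S| = 1`, where the extended cost is `A_1 = 0`: the sum over `ℓ` of the product
of `t_ℓ δ_{n+1}` in coordinate `ℓ` with the normalized deficits `(r_k - c_k(X)) / (‖r_k‖₁ - s)`
in the other coordinates, where `t_ℓ` is the last entry of `r̄_ℓ^{(1)}`. Its marginals are right
because `∑_{ℓ ≠ k} t_ℓ = ‖r_k‖₁ - s`, and `t_ℓ ≥ 0` is exactly the mass condition.
Conversely, if `X̄ ∈ Π(r̄^{(1)})`, weighting its mass on each `T_S` by `1 - |S|` gives `s`, so its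
block on `T_∅ = [n]^m` has mass `p ≥ s`. Scaling that block by `s / p` gives a point of
`Π^s(r)`, at no greater cost since the extended cost is nonnegative.
-/

open Finset

noncomputable section

namespace MPOT

/-- The `k`-th marginal of a tensor indexed by `[n]^m` (functions `Fin m → Fin n`). -/
def marg {m n : ℕ} (X : (Fin m → Fin n) → ℝ) (k : Fin m) (j : Fin n) : ℝ :=
  ∑ v : Fin m → Fin n, if v k = j then X v else 0

/-- Entrywise (Frobenius) inner product of tensors. -/
def dot {m n : ℕ} (C X : (Fin m → Fin n) → ℝ) : ℝ :=
  ∑ v : Fin m → Fin n, C v * X v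

/-- The partial transport polytope `Π^s(r_1, …, r_m)`. -/
def PiPartial {m n : ℕ} (r : Fin m → Fin n → ℝ) (s : ℝ) :
    Set ((Fin m → Fin n) → ℝ) :=
  {X | (∀ v, 0 ≤ X v) ∧ (∀ k j, marg X k j ≤ r k j) ∧ ∑ v : Fin m → Fin n, X v = s}

/-- The transport polytope `Π(a_1, …, a_m)` with equality marginal constraints. -/
def PiEq {m n : ℕ} (a : Fin m → Fin n → ℝ) : Set ((Fin m → Fin n) → ℝ) :=
  {X | (∀ v, 0 ≤ X v) ∧ ∀ k j, marg X k j = a k j}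

/-- Embedding of `[n]^m` into `[n+1]^m`. -/
def emb {m n : ℕ} (v : Fin m → Fin n) : Fin m → Fin (n + 1) :=
  fun i => (v i).castSucc

/-- Restriction of a tensor on `[n+1]^m` to the indices in `[n]^m`. -/
def restr {m n : ℕ} (X : (Fin m → Fin (n + 1)) → ℝ) : (Fin m → Fin n) → ℝ :=
  fun v => X (emb v)

/-- The number of coordinates of `u` equal to `n+1` (i.e. `Fin.last n`); `u ∈ T_S`
with `|S| = nLast u`. -/
def nLast {m n : ℕ} (u : Fin m → Fin (n + 1)) : ℕ :=
  (univ.filter fun ℓ => u ℓ = Fin.last n).card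

/-- Extended cost tensor: the original cost on `T_∅ = [n]^m`, and value `A i` on the
`i`-th layer `∪_{|S| = i} T_S`. -/
def extCost {m n : ℕ} (C : (Fin m → Fin n) → ℝ) (A : ℕ → ℝ) :
    (Fin m → Fin (n + 1)) → ℝ :=
  fun u =>
    if h : ∀ i, u i ≠ Fin.last n then C fun i => (u i).castPred (h i)
    else A (nLast u)

/-- Total mass of `X` on the sublayer `T_S`. -/
def layerSum {m n : ℕ} (X : (Fin m → Fin (n + 1)) → ℝ) (S : Finset (Fin m)) : ℝ :=
  ∑ u : Fin m → Fin (n + 1), if ∀ ℓ, (u ℓ = Fin.last n ↔ ℓ ∈ S) then X u else 0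

/-- First-form extended marginals `r̄_k^{(1)} = [r_k, Σ_r/(m−1) − ‖r_k‖₁ − s/(m−1)]`. -/
def extMarg1 {m n : ℕ} (r : Fin m → Fin n → ℝ) (s : ℝ) : Fin m → Fin (n + 1) → ℝ :=
  fun k => Fin.snoc (r k)
    ((∑ i, ∑ j, r i j) / ((m : ℝ) - 1) - (∑ j, r k j) - s / ((m : ℝ) - 1))

/-- Second-form extended marginals `r̄_k^{(2)} = [r_k, Σ_{i≠k} ‖r_i‖₁ − (m−1)s]`. -/
def extMarg2 {m n : ℕ} (r : Fin m → Fin n → ℝ) (s : ℝ) : Fin m → Fin (n + 1) → ℝ :=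
  fun k => Fin.snoc (r k) ((∑ i ∈ univ.erase k, ∑ j, r i j) - ((m : ℝ) - 1) * s)

end MPOT

open MPOT

namespace MPOT

variable {m n N : ℕ}

section Marginals

lemma sum_marg (X : (Fin m → Fin N) → ℝ) (k : Fin m) : ∑ j, marg X k j = ∑ v, X v := by
  simp only [marg]
  rw [Finset.sum_comm]
  simp

lemma marg_nonneg {X : (Fin m → Fin N) → ℝ} (hX : ∀ v, 0 ≤ X v) (k : Fin m) (j : Fin N) :
    0 ≤ marg X k j :=
  Finset.sum_nonneg fun v _ => by split_ifs <;> simp [hX v]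

lemma marg_add (X Y : (Fin m → Fin N) → ℝ) (k : Fin m) (j : Fin N) :
    marg (X + Y) k j = marg X k j + marg Y k j := by
  simp only [marg, ← Finset.sum_add_distrib, Pi.add_apply, ite_add_ite, add_zero]

lemma marg_smul (c : ℝ) (X : (Fin m → Fin N) → ℝ) (k : Fin m) (j : Fin N) :
    marg (c • X) k j = c * marg X k j := by
  simp only [marg, Finset.mul_sum, Pi.smul_apply, smul_eq_mul, mul_ite, mul_zero]

lemma marg_sum {ι : Type*} (S : Finset ι) (F : ι → (Fin m → Fin N) → ℝ) (k : Fin m) (j : Fin N) :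
    marg (∑ ℓ ∈ S, F ℓ) k j = ∑ ℓ ∈ S, marg (F ℓ) k j := by
  simp only [marg, Finset.sum_apply]
  rw [Finset.sum_comm]
  simp only [Finset.sum_ite_irrel, Finset.sum_const_zero]

lemma dot_add (C X Y : (Fin m → Fin N) → ℝ) : dot C (X + Y) = dot C X + dot C Y := by
  simp only [dot, Pi.add_apply, mul_add, Finset.sum_add_distrib]

lemma dot_smul (C X : (Fin m → Fin N) → ℝ) (c : ℝ) : dot C (c • X) = c * dot C X := by
  simp only [dot, Pi.smul_apply, smul_eq_mul, Finset.mul_sum]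
  exact Finset.sum_congr rfl fun _ _ => by ring

lemma dot_nonneg {C X : (Fin m → Fin N) → ℝ} (hC : ∀ v, 0 ≤ C v) (hX : ∀ v, 0 ≤ X v) :
    0 ≤ dot C X :=
  Finset.sum_nonneg fun v _ => mul_nonneg (hC v) (hX v)

end Marginals

section ProductTensor

def prodTensor (g : Fin m → Fin N → ℝ) : (Fin m → Fin N) → ℝ :=
  fun u => ∏ i, g i (u i)

lemma marg_prodTensor (g : Fin m → Fin N → ℝ) (k : Fin m) (j : Fin N) :
    marg (prodTensor g) k j = g k j * ∏ i ∈ univ.erase k, ∑ x, g i x := by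
  classical
  set g' := Function.update g k (Pi.single j (g k j))
  have hg' : ∀ i ∈ univ.erase k, g' i = g i := fun i hi =>
    Function.update_of_ne (ne_of_mem_erase hi) _ _
  have hterm (u : Fin m → Fin N) : (if u k = j then prodTensor g u else 0) = ∏ i, g' i (u i) := by
    have hrest : ∏ i ∈ univ.erase k, g' i (u i) = ∏ i ∈ univ.erase k, g i (u i) :=
      Finset.prod_congr rfl fun i hi => by rw [hg' i hi]
    rw [prodTensor, ← Finset.mul_prod_erase _ _ (mem_univ k),
      ← Finset.mul_prod_erase _ _ (mem_univ k), hrest]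
    by_cases h : u k = j <;> simp [g', h]
  rw [marg, Finset.sum_congr rfl fun u _ => hterm u, ← Fintype.prod_sum,
    ← Finset.mul_prod_erase _ _ (mem_univ k), Finset.prod_congr rfl fun i hi => by rw [hg' i hi]]
  simp [g']

end ProductTensor

section Extension

lemma emb_injective : Function.Injective (emb (m := m) (n := n)) := fun _ _ h =>
  funext fun i => Fin.castSucc_injective _ (congrFun h i)

lemma emb_ne_last (v : Fin m → Fin n) (i : Fin m) : emb v i ≠ Fin.last n :=
  (Fin.castSucc_lt_last _).ne

lemma exists_eq_last_of_notMem_range_emb {u : Fin m → Fin (n + 1)} (hu : u ∉ Set.range emb) :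
    ∃ i, u i = Fin.last n := by
  by_contra! h
  exact hu ⟨fun i => (u i).castPred (h i), funext fun i => Fin.castSucc_castPred _ _⟩

lemma sum_eq_sum_emb_add (f : (Fin m → Fin (n + 1)) → ℝ) :
    ∑ u, f u = ∑ v, f (emb v) + ∑ u with ∃ i, u i = Fin.last n, f u := by
  classical
  have hreal : ∑ v, f (emb v) = ∑ u with ¬ ∃ i, u i = Fin.last n, f u := by
    rw [Finset.sum_filter]
    refine Fintype.sum_of_injective emb emb_injective _ _ (fun u hu => ?_) fun v => ?_
    · rw [if_neg (not_not.2 (exists_eq_last_of_notMem_range_emb hu))]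
    · rw [if_pos (fun ⟨i, hi⟩ => emb_ne_last v i hi)]
  rw [hreal]
  exact (Finset.sum_filter_add_sum_filter_not _ _ _).symm.trans (add_comm _ _)

lemma sum_emb_of_eq_zero {f : (Fin m → Fin (n + 1)) → ℝ}
    (hf : ∀ u, (∃ i, u i = Fin.last n) → f u = 0) : ∑ v, f (emb v) = ∑ u, f u := by
  rw [sum_eq_sum_emb_add, Finset.sum_eq_zero fun u hu => hf u (Finset.mem_filter.1 hu).2, add_zero]

lemma sum_emb_le {f : (Fin m → Fin (n + 1)) → ℝ} (hf : ∀ u, 0 ≤ f u) :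
    ∑ v, f (emb v) ≤ ∑ u, f u := by
  rw [sum_eq_sum_emb_add]
  exact le_add_of_nonneg_right (Finset.sum_nonneg fun u _ => hf u)

lemma sum_le_sum_emb {f : (Fin m → Fin (n + 1)) → ℝ}
    (hf : ∀ u, (∃ i, u i = Fin.last n) → f u ≤ 0) : ∑ u, f u ≤ ∑ v, f (emb v) := by
  rw [sum_eq_sum_emb_add]
  exact add_le_of_nonpos_right (Finset.sum_nonpos fun u hu => hf u (Finset.mem_filter.1 hu).2)

lemma nLast_emb (v : Fin m → Fin n) : nLast (emb v) = 0 := by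
  simp [nLast, emb_ne_last]

lemma one_le_nLast {u : Fin m → Fin (n + 1)} (h : ∃ i, u i = Fin.last n) : 1 ≤ nLast u :=
  let ⟨i, hi⟩ := h
  Finset.card_pos.2 ⟨i, by simp [hi]⟩

lemma exists_eq_last_of_nLast_ne_zero {u : Fin m → Fin (n + 1)} (h : nLast u ≠ 0) :
    ∃ i, u i = Fin.last n := by
  by_contra! hu
  simp [nLast, hu] at h

lemma nLast_le (u : Fin m → Fin (n + 1)) : nLast u ≤ m :=
  (Finset.card_filter_le _ _).trans_eq (Finset.card_fin m)

lemma sum_nLast_mul (Y : (Fin m → Fin (n + 1)) → ℝ) :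
    ∑ u, (nLast u : ℝ) * Y u = ∑ k, marg Y k (Fin.last n) := by
  simp only [nLast, Finset.natCast_card_filter, Finset.sum_mul, marg, ite_mul, one_mul, zero_mul]
  exact Finset.sum_comm

def padZero (X : (Fin m → Fin n) → ℝ) : (Fin m → Fin (n + 1)) → ℝ :=
  fun u => if h : ∀ i, u i ≠ Fin.last n then X fun i => (u i).castPred (h i) else 0

lemma padZero_emb (X : (Fin m → Fin n) → ℝ) (v : Fin m → Fin n) : padZero X (emb v) = X v := by
  simp [padZero, emb]

lemma padZero_of_exists {X : (Fin m → Fin n) → ℝ} {u : Fin m → Fin (n + 1)}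
    (h : ∃ i, u i = Fin.last n) : padZero X u = 0 := by
  rw [padZero, dif_neg (by simpa using h)]

lemma padZero_nonneg {X : (Fin m → Fin n) → ℝ} (hX : ∀ v, 0 ≤ X v) (u : Fin m → Fin (n + 1)) :
    0 ≤ padZero X u := by
  unfold padZero
  split_ifs
  exacts [hX _, le_rfl]

lemma marg_padZero (X : (Fin m → Fin n) → ℝ) (k : Fin m) :
    marg (padZero X) k = Fin.snoc (marg X k) 0 := by
  funext x
  rw [marg, ← sum_emb_of_eq_zero fun u hu => by rw [padZero_of_exists hu, ite_self]]
  refine Fin.lastCases ?_ (fun j => ?_) x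
  · simp [emb_ne_last]
  · simp [marg, padZero_emb, emb]

lemma extCost_emb (C : (Fin m → Fin n) → ℝ) (A : ℕ → ℝ) (v : Fin m → Fin n) :
    extCost C A (emb v) = C v := by
  simp [extCost, emb]

lemma extCost_of_exists (C : (Fin m → Fin n) → ℝ) (A : ℕ → ℝ) {u : Fin m → Fin (n + 1)}
    (h : ∃ i, u i = Fin.last n) : extCost C A u = A (nLast u) := by
  rw [extCost, dif_neg (by simpa using h)]

lemma extCost_nonneg {C : (Fin m → Fin n) → ℝ} (hC : ∀ v, 0 ≤ C v) {A : ℕ → ℝ}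
    (hA : ∀ i, 1 ≤ i → i ≤ m → 0 ≤ A i) (u : Fin m → Fin (n + 1)) : 0 ≤ extCost C A u := by
  by_cases h : ∃ i, u i = Fin.last n
  · rw [extCost_of_exists C A h]
    exact hA _ (one_le_nLast h) (nLast_le u)
  · rw [extCost, dif_pos (by simpa using h)]
    exact hC _

lemma dot_extCost_padZero (C X : (Fin m → Fin n) → ℝ) (A : ℕ → ℝ) :
    dot (extCost C A) (padZero X) = dot C X := by
  rw [dot, ← sum_emb_of_eq_zero fun u hu => by rw [padZero_of_exists hu, mul_zero]]
  simp only [extCost_emb, padZero_emb, dot]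

lemma restr_extCost (C : (Fin m → Fin n) → ℝ) (A : ℕ → ℝ) : restr (extCost C A) = C :=
  funext (extCost_emb C A)

lemma dot_restr_le {D Y : (Fin m → Fin (n + 1)) → ℝ} (hD : ∀ u, 0 ≤ D u) (hY : ∀ u, 0 ≤ Y u) :
    dot (restr D) (restr Y) ≤ dot D Y :=
  sum_emb_le fun u => mul_nonneg (hD u) (hY u)

lemma marg_restr_le {Y : (Fin m → Fin (n + 1)) → ℝ} (hY : ∀ u, 0 ≤ Y u) (k : Fin m) (j : Fin n) :
    marg (restr Y) k j ≤ marg Y k j.castSucc := by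
  refine le_of_eq_of_le ?_ (sum_emb_le fun u => by split_ifs <;> simp [hY u])
  simp [marg, restr, emb]

end Extension

section ExtendedMarginals

lemma extMarg1_castSucc (r : Fin m → Fin n → ℝ) (s : ℝ) (k : Fin m) (j : Fin n) :
    extMarg1 r s k j.castSucc = r k j := by
  simp [extMarg1]

lemma extMarg1_last (r : Fin m → Fin n → ℝ) (s : ℝ) (k : Fin m) :
    extMarg1 r s k (Fin.last n) = (∑ i, ∑ j, r i j - s) / ((m : ℝ) - 1) - ∑ j, r k j := by
  simp only [extMarg1, Fin.snoc_last, sub_div]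
  ring

lemma sum_erase_extMarg1_last (hm : 2 ≤ m) (r : Fin m → Fin n → ℝ) (s : ℝ) (k : Fin m) :
    ∑ ℓ ∈ univ.erase k, extMarg1 r s ℓ (Fin.last n) = ∑ j, r k j - s := by
  have hm1 : (m : ℝ) - 1 ≠ 0 := by
    have : (2 : ℝ) ≤ m := by exact_mod_cast hm
    linarith
  rw [Finset.sum_erase_eq_sub (mem_univ k)]
  simp only [extMarg1_last, Finset.sum_sub_distrib, Finset.sum_const, Finset.card_univ,
    Fintype.card_fin, nsmul_eq_mul]
  field_simp
  ring

lemma extMarg1_last_nonneg (hm : 2 ≤ m) {r : Fin m → Fin n → ℝ} {s : ℝ}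
    (hcond : ∀ k, ((m : ℝ) - 1) * (∑ j, r k j) + s ≤ ∑ i, ∑ j, r i j) (k : Fin m) :
    0 ≤ extMarg1 r s k (Fin.last n) := by
  have hm1 : (0 : ℝ) < (m : ℝ) - 1 := by
    have : (2 : ℝ) ≤ m := by exact_mod_cast hm
    linarith
  rw [extMarg1_last, sub_nonneg, le_div_iff₀ hm1]
  linarith [hcond k]

lemma sum_one_sub_nLast_mul (hm : 2 ≤ m) {r : Fin m → Fin n → ℝ} {s : ℝ}
    {Y : (Fin m → Fin (n + 1)) → ℝ} (hY : ∀ k x, marg Y k x = extMarg1 r s k x) :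
    ∑ u, (1 - (nLast u : ℝ)) * Y u = s := by
  have k₀ : Fin m := ⟨0, by omega⟩
  have hmass : ∑ u, Y u = ∑ j, r k₀ j + extMarg1 r s k₀ (Fin.last n) := by
    simp only [← sum_marg Y k₀, Fin.sum_univ_castSucc, hY, extMarg1_castSucc]
  simp only [sub_mul, one_mul, Finset.sum_sub_distrib, sum_nLast_mul, hY, hmass,
    ← Finset.add_sum_erase _ _ (mem_univ k₀), sum_erase_extMarg1_last hm]
  ring

end ExtendedMarginals

section LayerOne

variable (t : Fin m → ℝ) (d : Fin m → Fin n → ℝ)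

/-- The zero vector when `∑ j, d k j = 0`, since `x / 0 = 0`. -/
def normalizedSnoc (k : Fin m) : Fin (n + 1) → ℝ :=
  Fin.snoc (fun j => d k j / ∑ j', d k j') 0

def layerOneFactors (ℓ : Fin m) : Fin m → Fin (n + 1) → ℝ :=
  Function.update (normalizedSnoc d) ℓ (Pi.single (Fin.last n) (t ℓ))

def layerOneTensor : (Fin m → Fin (n + 1)) → ℝ :=
  ∑ ℓ, prodTensor (layerOneFactors t d ℓ)

variable {t d}

lemma layerOneFactors_of_ne {ℓ k : Fin m} (hk : k ≠ ℓ) :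
    layerOneFactors t d ℓ k = normalizedSnoc d k :=
  Function.update_of_ne hk _ _

lemma layerOneFactors_self (ℓ : Fin m) :
    layerOneFactors t d ℓ ℓ = Pi.single (Fin.last n) (t ℓ) :=
  Function.update_self _ _ _

lemma layerOneFactors_nonneg (ht : ∀ ℓ, 0 ≤ t ℓ) (hd : ∀ k j, 0 ≤ d k j) (ℓ k : Fin m)
    (x : Fin (n + 1)) : 0 ≤ layerOneFactors t d ℓ k x := by
  rcases eq_or_ne k ℓ with rfl | hk
  · simp only [layerOneFactors, Function.update_self, Pi.single_apply]
    split_ifs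
    exacts [ht k, le_rfl]
  · rw [layerOneFactors_of_ne hk]
    refine Fin.lastCases (by simp [normalizedSnoc]) (fun j => ?_) x
    simpa [normalizedSnoc] using div_nonneg (hd k j) (Finset.sum_nonneg fun j _ => hd k j)

/-- Whenever `t ℓ ≠ 0`, every other `d i` has positive mass `∑_{ℓ' ≠ i} t ℓ' ≥ t ℓ`, so its
normalized factor has total mass one. -/
lemma mul_prod_sum_layerOneFactors (ht : ∀ ℓ, 0 ≤ t ℓ)
    (hsum : ∀ k, ∑ j, d k j = ∑ ℓ ∈ univ.erase k, t ℓ) {ℓ : Fin m} {S : Finset (Fin m)}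
    (hS : ℓ ∉ S) : t ℓ * ∏ i ∈ S, ∑ x, layerOneFactors t d ℓ i x = t ℓ := by
  rcases (ht ℓ).eq_or_lt with hℓ | hℓ
  · rw [← hℓ, zero_mul]
  refine (congrArg _ (Finset.prod_eq_one fun i hi => ?_)).trans (mul_one _)
  have hi : i ≠ ℓ := ne_of_mem_of_not_mem hi hS
  have hpos : 0 < ∑ j, d i j := hsum i ▸ hℓ.trans_le
    (Finset.single_le_sum (fun ℓ' _ => ht ℓ') (mem_erase.2 ⟨hi.symm, mem_univ ℓ⟩))
  simp [layerOneFactors_of_ne hi, normalizedSnoc, Fin.sum_univ_castSucc, ← Finset.sum_div, hpos.ne']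

lemma marg_prodTensor_layerOneFactors_self (ht : ∀ ℓ, 0 ≤ t ℓ)
    (hsum : ∀ k, ∑ j, d k j = ∑ ℓ ∈ univ.erase k, t ℓ) (k : Fin m) :
    marg (prodTensor (layerOneFactors t d k)) k = Pi.single (Fin.last n) (t k) := by
  funext x
  rw [marg_prodTensor, layerOneFactors_self, Pi.single_apply]
  split_ifs
  · exact mul_prod_sum_layerOneFactors ht hsum (notMem_erase k univ)
  · exact zero_mul _

lemma marg_prodTensor_layerOneFactors_of_ne (ht : ∀ ℓ, 0 ≤ t ℓ)
    (hsum : ∀ k, ∑ j, d k j = ∑ ℓ ∈ univ.erase k, t ℓ) {k ℓ : Fin m} (hk : k ≠ ℓ)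
    (x : Fin (n + 1)) :
    marg (prodTensor (layerOneFactors t d ℓ)) k x =
      t ℓ * normalizedSnoc d k x := by
  have hℓ : ℓ ∈ univ.erase k := mem_erase.2 ⟨hk.symm, mem_univ ℓ⟩
  rw [marg_prodTensor, ← Finset.mul_prod_erase _ _ hℓ, layerOneFactors_of_ne hk,
    layerOneFactors_self, Finset.sum_pi_single', if_pos (mem_univ _),
    mul_prod_sum_layerOneFactors ht hsum (notMem_erase ℓ _), mul_comm]

lemma marg_layerOneTensor (ht : ∀ ℓ, 0 ≤ t ℓ) (hd : ∀ k j, 0 ≤ d k j)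
    (hsum : ∀ k, ∑ j, d k j = ∑ ℓ ∈ univ.erase k, t ℓ) (k : Fin m) :
    marg (layerOneTensor t d) k = Fin.snoc (d k) (t k) := by
  funext x
  rw [layerOneTensor, marg_sum, ← Finset.add_sum_erase _ _ (mem_univ k),
    marg_prodTensor_layerOneFactors_self ht hsum k,
    Finset.sum_congr rfl fun ℓ hℓ =>
      marg_prodTensor_layerOneFactors_of_ne ht hsum (ne_of_mem_erase hℓ).symm x,
    ← Finset.sum_mul, ← hsum]
  refine Fin.lastCases (by simp [normalizedSnoc]) (fun j => ?_) x
  have hzero : ∑ j', d k j' = 0 → d k j = 0 := fun h =>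
    (Finset.sum_eq_zero_iff_of_nonneg fun j _ => hd k j).1 h j (mem_univ j)
  simp only [normalizedSnoc, Fin.snoc_castSucc, Pi.single_apply, (Fin.castSucc_lt_last j).ne,
    if_false, zero_add]
  rw [mul_comm, div_mul_cancel_of_imp hzero]

lemma layerOneTensor_nonneg (ht : ∀ ℓ, 0 ≤ t ℓ) (hd : ∀ k j, 0 ≤ d k j)
    (u : Fin m → Fin (n + 1)) : 0 ≤ layerOneTensor t d u := by
  rw [layerOneTensor, Finset.sum_apply]
  exact Finset.sum_nonneg fun ℓ _ =>
    Finset.prod_nonneg fun i _ => layerOneFactors_nonneg ht hd ℓ i (u i)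

lemma layerOneTensor_eq_zero {u : Fin m → Fin (n + 1)} (hu : nLast u ≠ 1) :
    layerOneTensor t d u = 0 := by
  rw [layerOneTensor, Finset.sum_apply]
  refine Finset.sum_eq_zero fun ℓ _ => Finset.prod_eq_zero_iff.2 ?_
  by_contra! h
  have hℓ : u ℓ = Fin.last n := by
    by_contra hℓ
    simpa [layerOneFactors, Pi.single_apply, hℓ] using h ℓ (mem_univ ℓ)
  have hother : ∀ i, i ≠ ℓ → u i ≠ Fin.last n := fun i hi hi' => by
    simpa [layerOneFactors_of_ne hi, normalizedSnoc, hi'] using h i (mem_univ i)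
  exact hu (Finset.card_eq_one.2 ⟨ℓ, Finset.eq_singleton_iff_unique_mem.2
    ⟨by simpa, fun i hi => by_contra fun hne => hother i hne (Finset.mem_filter.1 hi).2⟩⟩)

end LayerOne

lemma nonneg_of_eq_zero_of_lt_succ {A : ℕ → ℝ} (hA1 : A 1 = 0)
    (hA : ∀ i, 1 ≤ i → i < m → A i < A (i + 1)) : ∀ i, 1 ≤ i → i ≤ m → 0 ≤ A i := by
  intro i hi
  induction i, hi using Nat.le_induction with
  | base => exact fun _ => hA1.ge
  | succ i hi ih => exact fun him => (ih (by omega)).trans (hA i hi (by omega)).le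

theorem exists_mem_piEq_dot_eq (hm : 2 ≤ m) (C : (Fin m → Fin n) → ℝ) {r : Fin m → Fin n → ℝ}
    {s : ℝ} (hcond : ∀ k, ((m : ℝ) - 1) * (∑ j, r k j) + s ≤ ∑ i, ∑ j, r i j)
    {A : ℕ → ℝ} (hA1 : A 1 = 0) {X : (Fin m → Fin n) → ℝ} (hX : X ∈ PiPartial r s) :
    ∃ Y ∈ PiEq (extMarg1 r s), dot (extCost C A) Y = dot C X := by
  obtain ⟨hX0, hXr, hXs⟩ := hX
  set t : Fin m → ℝ := fun k => extMarg1 r s k (Fin.last n)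
  set d : Fin m → Fin n → ℝ := fun k j => r k j - marg X k j
  have ht : ∀ k, 0 ≤ t k := extMarg1_last_nonneg hm hcond
  have hd : ∀ k j, 0 ≤ d k j := fun k j => sub_nonneg.2 (hXr k j)
  have hsum : ∀ k, ∑ j, d k j = ∑ ℓ ∈ univ.erase k, t ℓ := fun k => by
    simp only [d, t, Finset.sum_sub_distrib, sum_marg, hXs, sum_erase_extMarg1_last hm]
  refine ⟨padZero X + layerOneTensor t d, ⟨fun u => ?_, fun k x => ?_⟩, ?_⟩
  · exact add_nonneg (padZero_nonneg hX0 u) (layerOneTensor_nonneg ht hd u)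
  · rw [marg_add, marg_padZero, marg_layerOneTensor ht hd hsum]
    refine Fin.lastCases ?_ (fun j => ?_) x
    · simp [t]
    · simp [d, extMarg1_castSucc]
  · rw [dot_add, dot_extCost_padZero, add_eq_left]
    refine Finset.sum_eq_zero fun u _ => ?_
    rcases eq_or_ne (nLast u) 1 with hu | hu
    · rw [extCost_of_exists C A (exists_eq_last_of_nLast_ne_zero (by omega)), hu, hA1, zero_mul]
    · rw [layerOneTensor_eq_zero hu, mul_zero]

theorem exists_mem_piPartial_dot_le (hm : 2 ≤ m) {C : (Fin m → Fin n) → ℝ} (hC : ∀ v, 0 ≤ C v)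
    {r : Fin m → Fin n → ℝ} {s : ℝ} (hs0 : 0 ≤ s) {A : ℕ → ℝ}
    (hA : ∀ i, 1 ≤ i → i ≤ m → 0 ≤ A i) {Y : (Fin m → Fin (n + 1)) → ℝ}
    (hY : Y ∈ PiEq (extMarg1 r s)) :
    ∃ X ∈ PiPartial r s, dot C X ≤ dot (extCost C A) Y := by
  obtain ⟨hY0, hYm⟩ := hY
  set p := ∑ v, restr Y v
  have hsp : s ≤ p :=
    calc s = ∑ u, (1 - (nLast u : ℝ)) * Y u := (sum_one_sub_nLast_mul hm hYm).symm
      _ ≤ ∑ v, (1 - (nLast (emb v) : ℝ)) * Y (emb v) := sum_le_sum_emb fun u hu =>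
        mul_nonpos_of_nonpos_of_nonneg
          (sub_nonpos.2 (by exact_mod_cast one_le_nLast hu)) (hY0 u)
      _ = p := by simp [nLast_emb, p, restr]
  have hcoef : s / p ≤ 1 := div_le_one_of_le₀ hsp (hs0.trans hsp)
  have hcoef0 : 0 ≤ s / p := div_nonneg hs0 (hs0.trans hsp)
  have hrestr0 : ∀ v, 0 ≤ restr Y v := fun v => hY0 _
  refine ⟨(s / p) • restr Y, ⟨fun v => mul_nonneg hcoef0 (hrestr0 v), fun k j => ?_, ?_⟩, ?_⟩
  · calc marg ((s / p) • restr Y) k j = s / p * marg (restr Y) k j := marg_smul _ _ k j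
      _ ≤ marg (restr Y) k j := mul_le_of_le_one_left (marg_nonneg hrestr0 k j) hcoef
      _ ≤ marg Y k j.castSucc := marg_restr_le hY0 k j
      _ = r k j := by rw [hYm, extMarg1_castSucc]
  · simp only [Pi.smul_apply, smul_eq_mul, ← Finset.mul_sum]
    exact div_mul_cancel_of_imp fun hp => le_antisymm (hp ▸ hsp) hs0
  · calc dot C ((s / p) • restr Y) = s / p * dot C (restr Y) := dot_smul _ _ _
      _ ≤ dot C (restr Y) := mul_le_of_le_one_left (dot_nonneg hC hrestr0) hcoef
      _ = dot (restr (extCost C A)) (restr Y) := by rw [restr_extCost]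
      _ ≤ dot (extCost C A) Y := dot_restr_le (extCost_nonneg hC hA) hY0

end MPOT

theorem mpot_equivalence_first_form_general {m n : ℕ} (hm : 2 ≤ m)
    (C : (Fin m → Fin n) → ℝ) (hC : ∀ v, 0 ≤ C v)
    (r : Fin m → Fin n → ℝ)
    (s : ℝ) (hs0 : 0 ≤ s)
    (hcond : ∀ k, ((m : ℝ) - 1) * (∑ j, r k j) + s ≤ ∑ i, ∑ j, r i j)
    (A : ℕ → ℝ) (hA1 : A 1 = 0) (hA : ∀ i, 1 ≤ i → i < m → A i < A (i + 1)) :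
    sInf ((fun X => dot C X) '' PiPartial r s)
      = sInf ((fun Y => dot (extCost C A) Y) '' PiEq (extMarg1 r s)) := by
  refine csInf_eq_csInf_of_forall_exists_le ?_ ?_
  · rintro _ ⟨X, hX, rfl⟩
    obtain ⟨Y, hY, hcost⟩ := exists_mem_piEq_dot_eq hm C hcond hA1 hX
    exact ⟨_, ⟨Y, hY, rfl⟩, hcost.le⟩
  · rintro _ ⟨Y, hY, rfl⟩
    obtain ⟨X, hX, hcost⟩ :=
      exists_mem_piPartial_dot_le hm hC hs0 (nonneg_of_eq_zero_of_lt_succ hA1 hA) hY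
    exact ⟨_, ⟨X, hX, rfl⟩, hcost⟩

/-- Theorem 3.1, first equivalent form: under the mass condition
`Σ_r ≥ (m−1)‖r_k‖₁ + s` for all `k`, the multimarginal partial optimal transport problem
equals the multimarginal optimal transport problem with extended marginals `r̄_k^{(1)}`
and extended cost `C̄^{(1)}` built from `0 = A_1 < A_2 < … < A_m`. -/
theorem mpot_equivalence_first_form {m n : ℕ} (hm : 2 ≤ m) (hn : 1 ≤ n)
    (C : (Fin m → Fin n) → ℝ) (hC : ∀ v, 0 ≤ C v)
    (r : Fin m → Fin n → ℝ) (hr : ∀ k j, 0 ≤ r k j)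
    (s : ℝ) (hs0 : 0 ≤ s) (hs : ∀ k, s ≤ ∑ j, r k j)
    (hcond : ∀ k, ((m : ℝ) - 1) * (∑ j, r k j) + s ≤ ∑ i, ∑ j, r i j)
    (A : ℕ → ℝ) (hA1 : A 1 = 0) (hA : ∀ i, 1 ≤ i → i < m → A i < A (i + 1)) :
    sInf ((fun X => dot C X) '' PiPartial r s)
      = sInf ((fun Y => dot (extCost C A) Y) '' PiEq (extMarg1 r s)) :=
  mpot_equivalence_first_form_general hm C hC r s hs0 hcond A hA1 hA
end
end

section
/- Let m ≥ 3 and let D_0, D_1, …, D_{m−1} be reals with D_{m−1} = 0 whose second differences Δ_j^{(2)} := D_{j+1} + D_{j−1} − 2D_j satisfy Δ_j^{(2)} ≤ 0 for all j ∈ [m−2] and Δ_j^{(2)} ≤ (m−1−j)Δ_{j+1}^{(2)} for all j ∈ [m−3]. Then for every i ∈ [m−2], setting k = m − i + 1, one has D_{i−1} + (k−1)D_{i+1} − (k−1)D_i ≤ 0. -/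
/-!
Write `E i = D (i-1) + (m-i) (D (i+1) - D i)` (`weightedGap`) and `Δ` for `secondDiff`. The identity
`E i - E (i+1) = Δ i - (m-1-i) Δ (i+1)` turns the second hypothesis into monotonicity of `E` on
`[1, m-2]`, and the last value is `E (m-2) = Δ (m-2) + D (m-1) = Δ (m-2) ≤ 0`.
-/

namespace ConcaveSequence

def secondDiff (D : ℕ → ℝ) (j : ℕ) : ℝ := D (j + 1) + D (j - 1) - 2 * D j

def weightedGap (m : ℕ) (D : ℕ → ℝ) (i : ℕ) : ℝ :=
  D (i - 1) + ((m - i : ℕ) : ℝ) * D (i + 1) - ((m - i : ℕ) : ℝ) * D i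

lemma weightedGap_sub_weightedGap_succ {m i : ℕ} (D : ℕ → ℝ) (hi : 1 ≤ i) (him : i + 2 ≤ m) :
    weightedGap m D i - weightedGap m D (i + 1) =
      secondDiff D i - ((m - 1 - i : ℕ) : ℝ) * secondDiff D (i + 1) := by
  obtain ⟨a, rfl⟩ : ∃ a, i = a + 1 := ⟨i - 1, by omega⟩
  simp only [weightedGap, secondDiff, Nat.add_sub_cancel,
    show m - (a + 1) = m - 1 - (a + 1) + 1 by omega, show m - (a + 1 + 1) = m - 1 - (a + 1) by omega]
  push_cast
  ring

lemma weightedGap_sub_two {m : ℕ} (D : ℕ → ℝ) (hm : 2 ≤ m) :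
    weightedGap m D (m - 2) = secondDiff D (m - 2) + D (m - 1) := by
  obtain ⟨n, rfl⟩ := Nat.exists_eq_add_of_le' hm
  simp only [weightedGap, secondDiff, Nat.add_sub_cancel, show n + 2 - n = 2 by omega,
    show n + 2 - 1 = n + 1 by omega]
  push_cast
  ring

end ConcaveSequence

open ConcaveSequence in
/-- key inequality in Step 3 of the proof of Theorem 3.2: if
`D_{m−1} = 0`, the second differences `Δ_j^{(2)} = D_{j+1} + D_{j−1} − 2D_j` are
nonpositive for `j ∈ [m−2]` and satisfy `Δ_j^{(2)} ≤ (m−1−j)Δ_{j+1}^{(2)}` for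
`j ∈ [m−3]`, then for every `i ∈ [m−2]`, with `k = m − i + 1`,
`D_{i−1} + (k−1)D_{i+1} − (k−1)D_i ≤ 0`. -/
theorem concave_sequence_inequality {m : ℕ} (hm : 3 ≤ m) (D : ℕ → ℝ)
    (hDm1 : D (m - 1) = 0)
    (h1 : ∀ j, 1 ≤ j → j ≤ m - 2 → D (j + 1) + D (j - 1) - 2 * D j ≤ 0)
    (h2 : ∀ j, 1 ≤ j → j ≤ m - 3 →
      D (j + 1) + D (j - 1) - 2 * D j
        ≤ ((m - 1 - j : ℕ) : ℝ) * (D (j + 2) + D j - 2 * D (j + 1))) :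
    ∀ i, 1 ≤ i → i ≤ m - 2 →
      D (i - 1) + ((m - i : ℕ) : ℝ) * D (i + 1) - ((m - i : ℕ) : ℝ) * D i ≤ 0 := by
  intro i hi hi'
  have hmono : MonotoneOn (weightedGap m D) (Set.Icc 1 (m - 2)) := by
    refine monotoneOn_of_le_add_one Set.ordConnected_Icc fun j _ hj hj' => ?_
    have hstep := weightedGap_sub_weightedGap_succ (m := m) D hj.1 (by have := hj'.2; omega)
    have h2j : secondDiff D j ≤ ((m - 1 - j : ℕ) : ℝ) * secondDiff D (j + 1) := by
      unfold secondDiff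
      rw [Nat.add_sub_cancel]
      exact h2 j hj.1 (by have := hj'.2; omega)
    linarith
  have hlast : weightedGap m D (m - 2) ≤ 0 := by
    rw [weightedGap_sub_two D (by omega), hDm1, add_zero]
    exact h1 (m - 2) (by omega) le_rfl
  exact (hmono ⟨hi, hi'⟩ ⟨by omega, le_rfl⟩ hi').trans hlast
end

section
/- Let m ≥ 3 and D_0 > 0. Define Δ_j^{(2)} := −(m−1−j)! for j ∈ [m−2], Δ_0^{(1)} := −(Σ_{i=1}^{m−2} (m−1−i)Δ_i^{(2)} + D_0)/(m−1), and D_i := Δ_{i−1}^{(2)} + 2Δ_{i−2}^{(2)} + … + (i−1)Δ_1^{(2)} + iΔ_0^{(1)} + D_0 for i = 1, …, m−1. Then the resulting sequence satisfies: (i) D_{m−1} = 0; (ii) D_{j+1} + D_{j−1} − 2D_j = Δ_j^{(2)} ≤ (m−1−j)Δ_{j+1}^{(2)} ≤ 0 for all j ∈ [m−3]; and (iii) D_i ≥ 0 for all 0 ≤ i ≤ m−1. -/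
/-!
With `Δ₂ j = -(m-1-j)!`, the sequence `D` has second differences `Δ₂ j ≤ 0`, so it is concave
and therefore bounded below by `min (D 0) (D (m-1)) = min D₀ 0 = 0`. The choice of `Δ₀⁽¹⁾` is
exactly what makes `D (m-1) = 0`, and `(m-1-j)! = (m-1-j) (m-2-j)!` gives the middle inequality
of (ii) with equality.
-/

open Finset

theorem min_le_of_antitone_sub {α : Type*} [AddCommGroup α] [LinearOrder α] [IsOrderedAddMonoid α]
    {D : ℕ → α} (hD : Antitone fun i => D (i + 1) - D i) {i n : ℕ} (hin : i ≤ n) :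
    min (D 0) (D n) ≤ D i := by
  -- The difference at `i` bounds all later differences above and all earlier ones below.
  rcases le_total (D (i + 1) - D i) 0 with hdec | hinc
  · have : D n - D i ≤ 0 := by
      rw [← sum_Ico_sub D hin]
      exact sum_nonpos fun t ht => (hD (mem_Ico.mp ht).1).trans hdec
    exact min_le_of_right_le (sub_nonpos.mp this)
  · have : 0 ≤ D i - D 0 := by
      rw [← sum_Ico_sub D (Nat.zero_le i)]
      exact sum_nonneg fun t ht => hinc.trans (hD (mem_Ico.mp ht).2.le)
    exact min_le_of_left_le (sub_nonneg.mp this)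

/-- The sequence with value `d` at `0`, first difference `c` at `0`, and second differences
`a j` at each `j ≥ 1`. -/
def seqOfSecondDiffs (a : ℕ → ℝ) (c d : ℝ) (i : ℕ) : ℝ :=
  ∑ j ∈ Icc 1 (i - 1), ((i - j : ℕ) : ℝ) * a j + i * c + d

namespace seqOfSecondDiffs

variable (a : ℕ → ℝ) (c d : ℝ)

theorem succ_sub (i : ℕ) :
    seqOfSecondDiffs a c d (i + 1) - seqOfSecondDiffs a c d i = c + ∑ j ∈ Icc 1 i, a j := by
  have hshift : ∑ j ∈ Icc 1 i, ((i + 1 - j : ℕ) : ℝ) * a j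
      = ∑ j ∈ Icc 1 i, ((i - j : ℕ) : ℝ) * a j + ∑ j ∈ Icc 1 i, a j := by
    rw [← sum_add_distrib]
    refine sum_congr rfl fun j hj => ?_
    rw [Nat.sub_add_comm (mem_Icc.mp hj).2]
    push_cast
    ring
  have hdrop_last : ∑ j ∈ Icc 1 i, ((i - j : ℕ) : ℝ) * a j
      = ∑ j ∈ Icc 1 (i - 1), ((i - j : ℕ) : ℝ) * a j := by
    rcases i with _ | n
    · rfl
    · rw [sum_Icc_succ_top (by omega), Nat.sub_self, Nat.add_sub_cancel]
      simp
  simp only [seqOfSecondDiffs, Nat.add_sub_cancel, hshift, hdrop_last]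
  push_cast
  ring

theorem second_diff {j : ℕ} (hj : 1 ≤ j) :
    seqOfSecondDiffs a c d (j + 1) + seqOfSecondDiffs a c d (j - 1)
      - 2 * seqOfSecondDiffs a c d j = a j := by
  obtain ⟨k, rfl⟩ : ∃ k, j = k + 1 := ⟨j - 1, by omega⟩
  have h₁ := succ_sub a c d (k + 1)
  have h₀ := succ_sub a c d k
  rw [sum_Icc_succ_top (by omega)] at h₁
  rw [Nat.add_sub_cancel]
  linarith

theorem antitone_succ_sub (ha : ∀ j, a j ≤ 0) :
    Antitone fun i => seqOfSecondDiffs a c d (i + 1) - seqOfSecondDiffs a c d i := by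
  refine antitone_nat_of_succ_le fun i => ?_
  simp only [succ_sub, sum_Icc_succ_top (Nat.le_add_left 1 i)]
  linarith [ha (i + 1)]

theorem zero : seqOfSecondDiffs a c d 0 = d := by
  simp [seqOfSecondDiffs]

theorem eq_zero {n : ℕ} (hn : n ≠ 0) :
    seqOfSecondDiffs a (-(∑ j ∈ Icc 1 (n - 1), ((n - j : ℕ) : ℝ) * a j + d) / n) d n = 0 := by
  have : (n : ℝ) ≠ 0 := Nat.cast_ne_zero.mpr hn
  simp only [seqOfSecondDiffs]
  field_simp
  ring

end seqOfSecondDiffs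

/-- Remark after Theorem 3.2: taking `Δ_j^{(2)} := −(m−1−j)!` for
`j ∈ [m−2]`, `Δ_0^{(1)} := −(Σ_{i=1}^{m−2} (m−1−i)Δ_i^{(2)} + D_0)/(m−1)`, and
`D_i := Σ_{j=1}^{i−1} (i−j)Δ_j^{(2)} + iΔ_0^{(1)} + D_0` produces a sequence with
`D_{m−1} = 0`, second differences equal to `Δ_j^{(2)}` satisfying
`Δ_j^{(2)} ≤ (m−1−j)Δ_{j+1}^{(2)} ≤ 0` for `j ∈ [m−3]`, and `D_i ≥ 0` for
`0 ≤ i ≤ m−1`. -/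
theorem construct_concave_sequence {m : ℕ} (hm : 3 ≤ m) (D0 : ℝ) (hD0 : 0 < D0) :
    let Δ2 : ℕ → ℝ := fun j => -((m - 1 - j).factorial : ℝ)
    let Δ01 : ℝ :=
      -((∑ i ∈ Finset.Icc 1 (m - 2), ((m - 1 - i : ℕ) : ℝ) * Δ2 i) + D0) / ((m : ℝ) - 1)
    let D : ℕ → ℝ := fun i =>
      (∑ j ∈ Finset.Icc 1 (i - 1), ((i - j : ℕ) : ℝ) * Δ2 j) + (i : ℝ) * Δ01 + D0
    D (m - 1) = 0 ∧
      (∀ j, 1 ≤ j → j ≤ m - 3 →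
        D (j + 1) + D (j - 1) - 2 * D j = Δ2 j ∧
          Δ2 j ≤ ((m - 1 - j : ℕ) : ℝ) * Δ2 (j + 1) ∧
          ((m - 1 - j : ℕ) : ℝ) * Δ2 (j + 1) ≤ 0) ∧
      ∀ i, i ≤ m - 1 → 0 ≤ D i := by
  intro Δ2 Δ01 D
  have hΔ2 : ∀ j, Δ2 j ≤ 0 := fun j => neg_nonpos.mpr (Nat.cast_nonneg _)
  have hD_last : D (m - 1) = 0 := by
    have h := seqOfSecondDiffs.eq_zero Δ2 D0 (n := m - 1) (by omega)
    rwa [Nat.cast_pred (by omega), show m - 1 - 1 = m - 2 by omega] at h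
  refine ⟨hD_last, fun j hj hjm => ⟨seqOfSecondDiffs.second_diff Δ2 Δ01 D0 hj, ?_, ?_⟩,
    fun i hi => ?_⟩
  · obtain ⟨k, hk⟩ : ∃ k, m - 1 - j = k + 1 := ⟨m - 2 - j, by omega⟩
    simp only [Δ2, hk, show m - 1 - (j + 1) = k by omega, Nat.factorial_succ]
    push_cast
    linarith
  · exact mul_nonpos_of_nonneg_of_nonpos (Nat.cast_nonneg _) (hΔ2 _)
  · calc 0 = min (D 0) (D (m - 1)) := by
          rw [hD_last, show D 0 = D0 from seqOfSecondDiffs.zero Δ2 Δ01 D0, min_eq_right hD0.le]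
      _ ≤ D i := min_le_of_antitone_sub (seqOfSecondDiffs.antitone_succ_sub Δ2 Δ01 D0 hΔ2) hi
end
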